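/- Let R = R(M⃗_1,…,M⃗_s) be an R-cross-section of IS_n and let e be an idempotent of R. Then e is a block idempotent if and only if there do not exist idempotents e_1 ≠ 0 and e_2 ≠ 0 of R such that e_1 ⪯ e, e_2 ⪯ e and e_1 e_2 = 0. -/

import Mathlib

open scoped Classical

/-- `IS n` is the full inverse symmetric semigroup: all partial bijections of `Fin n`;
multiplication is composition of partial maps (maps acting on the right). -/
abbrev IS (n : ℕ) : Type := PEquiv (Fin n) (Fin n)

noncomputable section
namespace ISW

instance {n : ℕ} : Mul (IS n) := ⟨PEquiv.trans⟩
instance {n : ℕ} : One (IS n) := ⟨PEquiv.refl _⟩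

/-- The domain of a partial bijection. -/
def pdom {n : ℕ} (f : IS n) : Set (Fin n) := {x | (f x).isSome}

/-- The range of a partial bijection. -/
def pran {n : ℕ} (f : IS n) : Set (Fin n) := {y | (f.symm y).isSome}

/-- Green's R-relation on a semigroup (with identity): `u R v` iff `uS = vS`. -/
def GreenR {S : Type*} [Mul S] (u v : S) : Prop :=
  {w | ∃ s, w = u * s} = {w | ∃ s, w = v * s}

/-- Green's L-relation on a semigroup (with identity): `u L v` iff `Su = Sv`. -/
def GreenL {S : Type*} [Mul S] (u v : S) : Prop :=
  {w | ∃ s, w = s * u} = {w | ∃ s, w = s * v}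

/-- An R-cross-section: a subsemigroup containing exactly one element of every
Green R-class. -/
def IsRCrossSection {S : Type*} [Mul S] (T : Set S) : Prop :=
  (∀ a ∈ T, ∀ b ∈ T, a * b ∈ T) ∧ ∀ x : S, ∃! t, t ∈ T ∧ GreenR x t

/-- An L-cross-section: a subsemigroup containing exactly one element of every
Green L-class. -/
def IsLCrossSection {S : Type*} [Mul S] (T : Set S) : Prop :=
  (∀ a ∈ T, ∀ b ∈ T, a * b ∈ T) ∧ ∀ x : S, ∃! t, t ∈ T ∧ GreenL x t

/-- `φ` realizes a semigroup isomorphism from `T₁` onto `T₂`. -/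
def IsSemiIso {S₁ S₂ : Type*} [Mul S₁] [Mul S₂] (T₁ : Set S₁) (T₂ : Set S₂)
    (φ : S₁ → S₂) : Prop :=
  Set.BijOn φ T₁ T₂ ∧ ∀ a ∈ T₁, ∀ b ∈ T₁, φ (a * b) = φ a * φ b

/-- The partial wreath product `IS m ≀_p IS n`: pairs `(f, a)` with `a ∈ IS n` and
`f` a partial map from `Fin n` to `IS m` whose domain equals the domain of `a`. -/
structure PW (m n : ℕ) where
  base : IS n
  fib : Fin n → Option (IS m)
  dom_eq : ∀ x, (fib x).isSome ↔ (base x).isSome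

/-- Multiplication of the partial wreath product: `(f,a)·(g,b) = (f g^a, ab)`. -/
instance {m n : ℕ} : Mul (PW m n) where
  mul u v :=
    { base := u.base * v.base
      fib := fun x => Option.map₂ (· * ·) (u.fib x) ((u.base x).bind v.fib)
      dom_eq := by
        intro x
        show _ ↔ (((u.base x).bind v.base)).isSome
        cases h : u.base x with
        | none =>
          have : u.fib x = none := by
            have := (u.dom_eq x)
            simp [h] at this
            simpa using Option.not_isSome_iff_eq_none.mp (by simp [this])
          simp [h, this, Option.map₂]
        | some y =>
          have hf : (u.fib x).isSome := (u.dom_eq x).mpr (by simp [h])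
          obtain ⟨s, hs⟩ := Option.isSome_iff_exists.mp hf
          cases h2 : v.base y with
          | none =>
            have : v.fib y = none := by
              have := (v.dom_eq y)
              simp [h2] at this
              simpa using Option.not_isSome_iff_eq_none.mp (by simp [this])
            simp [h, h2, hs, this, Option.map₂]
          | some z =>
            have hg : (v.fib y).isSome := (v.dom_eq y).mpr (by simp [h2])
            obtain ⟨t, ht⟩ := Option.isSome_iff_exists.mp hg
            simp [h, h2, hs, ht, Option.map₂] }

/-- The identity of the partial wreath product. -/
instance {m n : ℕ} : One (PW m n) where
  one :=
    { base := 1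
      fib := fun _ => some 1
      dom_eq := by intro x; simp; rfl }

/-- `chainFun L j x`: with `L` listing the elements of a block in increasing order and
`0 ≤ j < |L|` (`j` is the 0-based version of the paper's index), this is the value at `x` of
the chain `a_{i,j}`: the partial bijection with domain everything except `L[j]`,
sending `L[l] ↦ L[l+1]` for `l < j` and fixing all other points. -/
def chainFun {n : ℕ} (L : List (Fin n)) (j : ℕ) (x : Fin n) : Option (Fin n) :=
  if x ∈ L then
    if L.idxOf x = j then none
    else if L.idxOf x < j then L[L.idxOf x + 1]?
    else some x
  else some x

/-- The generators `a_{i,j}` attached to an ordered decomposition with blocks `B i`. -/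
def RGens {n s : ℕ} (B : Fin s → List (Fin n)) : Set (IS n) :=
  {a : IS n | ∃ i : Fin s, ∃ j : ℕ, j < (B i).length ∧ ∀ x, a x = chainFun (B i) j x}

/-- `R(M⃗₁, …, M⃗ₛ)`: the subsemigroup of `IS n` generated by the chains `a_{i,j}`
together with the identity map. -/
def RSec {n s : ℕ} (B : Fin s → List (Fin n)) : Set (IS n) :=
  (Subsemigroup.closure (RGens B ∪ {1}) : Subsemigroup (IS n))

/-- A decomposition of `Fin n` into disjoint nonempty blocks, each block equipped with
a linear order, recorded by listing the elements of each block in increasing order. -/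
structure OrderedPartition (n s : ℕ) where
  B : Fin s → List (Fin n)
  nonempty : ∀ i, B i ≠ []
  nodup : ∀ i, (B i).Nodup
  disjoint : ∀ i j, i ≠ j → ∀ x, x ∈ B i → x ∉ B j
  cover : ∀ x, ∃ i, x ∈ B i

/-- The chain `a_{i,j}` of the block listed by `L`, viewed inside `IS(M_i)`, i.e. embedded
into `IS n` as a partial bijection whose domain is contained in the block: it is defined on
`L` minus `L[j]`, sends `L[l] ↦ L[l+1]` for `l < j` and fixes the other points of `L`. -/
def chainFunB {n : ℕ} (L : List (Fin n)) (j : ℕ) (x : Fin n) : Option (Fin n) :=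
  if x ∈ L then
    if L.idxOf x = j then none
    else if L.idxOf x < j then L[L.idxOf x + 1]?
    else some x
  else none

/-- The generators of `R(M⃗)` inside `IS(M)` (embedded in `IS n`), `M` listed by `L`. -/
def BlockGens {n : ℕ} (L : List (Fin n)) : Set (IS n) :=
  {a : IS n | ∃ j : ℕ, j < L.length ∧ ∀ x, a x = chainFunB L j x}

/-- The identity of `IS(M)` (embedded in `IS n`): the identity map of the block listed by `L`. -/
def idOn {n : ℕ} (L : List (Fin n)) : Set (IS n) :=
  {a : IS n | ∀ x, a x = if x ∈ L then some x else none}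

/-- The R-cross-section `R(M⃗)` of `IS(M)`, embedded into `IS n`, for the block listed by `L`. -/
def RSecBlock {n : ℕ} (L : List (Fin n)) : Set (IS n) :=
  (Subsemigroup.closure (BlockGens L ∪ idOn L) : Subsemigroup (IS n))

/-- The wreath product `R_i ≀_p R(M⃗_i)` where `R(M⃗_i) ⊆ IS(M_i)`, `M_i` listed by `L`,
and `R_i = T ⊆ IS m`, realized inside `PW m n` via the natural embedding
`IS m ≀_p IS(M_i) ⊆ IS m ≀_p IS n`. -/
def WBlock (m n : ℕ) (L : List (Fin n)) (T : Set (IS m)) : Set (PW m n) :=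
  {u : PW m n | u.base ∈ RSecBlock L ∧ ∀ x f, u.fib x = some f → f ∈ T}

/-- The element `e' = (0̄, 1)` of `IS m ≀_p IS n`: the second component is the identity of
`IS n` and the first component sends every point to the empty map `0` of `IS m`. -/
def ezero (m n : ℕ) : PW m n where
  base := 1
  fib := fun _ => some ⊥
  dom_eq := by intro x; simp; rfl

/-! Every element of `R(M⃗₁, …, M⃗ₛ)` moves the points of a block `M_i` only forward in the
order of `M_i`, and the points of `M_i` it fixes form an up-set (`AscendsOn`): this holds for
the generators and survives composition. Hence a nonzero idempotent below an idempotent with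
domain in `M_i` fixes the largest point of `M_i`, and no two of them multiply to `0`.
Conversely, `a_{i,1} ⋯ a_{i,|M_i|}` is the identity of `N_n ∖ M_i`, so the identities of
`N_n ∖ M_i` and of `M_i = ⋂_{k ≠ i} (N_n ∖ M_k)` lie in `R`. If `dom e` meets both `M_i` and
its complement, multiplying `e` by these two gives the forbidden pair. -/

open PEquiv

section PartialIdentities

variable {n : ℕ}

lemma mul_apply (a b : IS n) (x : Fin n) : (a * b) x = (a x).bind b := rfl

lemma one_apply (x : Fin n) : (1 : IS n) x = some x := rfl

lemma ofSet_apply (S : Set (Fin n)) [DecidablePred (· ∈ S)] (x : Fin n) :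
    (ofSet S : IS n) x = if x ∈ S then some x else none := rfl

lemma isSome_ofSet_iff {S : Set (Fin n)} [DecidablePred (· ∈ S)] {x : Fin n} :
    ((ofSet S : IS n) x).isSome ↔ x ∈ S := by
  rw [ofSet_apply]; split_ifs <;> simpa

lemma ofSet_mul_ofSet (S T : Set (Fin n)) [DecidablePred (· ∈ S)] [DecidablePred (· ∈ T)] :
    (ofSet S : IS n) * ofSet T = ofSet (S ∩ T) := by
  ext x y
  by_cases hS : x ∈ S <;> by_cases hT : x ∈ T <;> simp [mul_apply, ofSet_apply, hS, hT]

lemma ofSet_mul_ofSet_of_subset {S T : Set (Fin n)} [DecidablePred (· ∈ S)]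
    [DecidablePred (· ∈ T)] (h : S ⊆ T) :
    (ofSet S : IS n) * ofSet T = ofSet S ∧ (ofSet T : IS n) * ofSet S = ofSet S := by
  refine ⟨?_, ?_⟩ <;> ext x y <;> simp only [ofSet_mul_ofSet, ofSet_eq_some_iff] <;>
    grind

lemma ofSet_ne_bot {S : Set (Fin n)} [DecidablePred (· ∈ S)] (h : S.Nonempty) :
    (ofSet S : IS n) ≠ ⊥ := by
  obtain ⟨x, hx⟩ := h
  intro hbot
  simpa [hbot, bot_apply, hx] using ofSet_apply S x

lemma ofSet_eq_bot {S : Set (Fin n)} [DecidablePred (· ∈ S)] (h : S = ∅) :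
    (ofSet S : IS n) = ⊥ := by
  ext x y
  simp [h, bot_apply]

lemma eq_ofSet_of_mul_self {e : IS n} (he : e * e = e) : e = ofSet {x | e x = some x} := by
  ext x y
  rw [ofSet_eq_some_iff, Set.mem_ofPred_eq]
  constructor
  · intro hxy
    have hy : e y = some y := by simpa [mul_apply, hxy] using congrArg (· x) he
    exact ⟨e.inj hy hxy, hy⟩
  · rintro ⟨rfl, h⟩
    exact h

end PartialIdentities

section Chain

variable {n : ℕ} {L : List (Fin n)} {j : ℕ} {x : Fin n}

lemma chainFun_of_notMem (hx : x ∉ L) : chainFun L j x = some x := by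
  simp [chainFun, hx]

lemma chainFun_of_idxOf_lt (hx : x ∈ L) (h : L.idxOf x < j) :
    chainFun L j x = L[L.idxOf x + 1]? := by
  simp [chainFun, hx, h, h.ne]

lemma chainFun_of_idxOf_eq (hx : x ∈ L) (h : L.idxOf x = j) : chainFun L j x = none := by
  simp [chainFun, hx, h]

lemma chainFun_of_lt_idxOf (hx : x ∈ L) (h : j < L.idxOf x) : chainFun L j x = some x := by
  simp [chainFun, hx, h.ne', h.not_gt]

/-- The generator `a_{i,j}`: the cycle `L[0] ↦ ⋯ ↦ L[j] ↦ L[0]` with `L[j]` removed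
from its domain. -/
def chain (L : List (Fin n)) (j : ℕ) (hj : j < L.length) : IS n :=
  (ofSet {x | x ≠ L[j]}).trans (L.take (j + 1)).formPerm.toPEquiv

lemma chain_apply (hN : L.Nodup) (hj : j < L.length) (x : Fin n) :
    chain L j hj x = chainFun L j x := by
  have hchain : chain L j hj x = if x ≠ L[j] then some ((L.take (j + 1)).formPerm x) else none := by
    change ((ofSet {x | x ≠ L[j]} : IS n) x).bind _ = _
    rw [ofSet_apply]
    split_ifs <;> simp_all
  rw [hchain]
  by_cases hxL : x ∈ L
  · have hidx := List.idxOf_lt_length_of_mem hxL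
    have hx : L[L.idxOf x] = x := List.getElem_idxOf hidx
    have hxj : x = L[j] ↔ L.idxOf x = j := by
      constructor
      · rintro rfl; exact hN.idxOf_getElem j hj
      · rintro rfl; exact hx.symm
    rcases lt_trichotomy (L.idxOf x) j with hlt | heq | hgt
    · have hform := List.formPerm_apply_lt_getElem (L.take (j + 1))
        (hN.sublist (List.take_sublist _ _)) (L.idxOf x) (by simp; omega)
      simp only [List.getElem_take, hx] at hform
      rw [if_pos (by rw [Ne, hxj]; omega), hform, chainFun_of_idxOf_lt hxL hlt,
        List.getElem?_eq_getElem]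
    · rw [if_neg (by simpa [hxj] using heq), chainFun_of_idxOf_eq hxL heq]
    · rw [if_pos (by rw [Ne, hxj]; omega), chainFun_of_lt_idxOf hxL hgt,
        List.formPerm_apply_of_notMem (by rw [List.mem_take_iff_idxOf_lt hxL]; omega)]
  · have hne : x ≠ L[j] := fun h => hxL (h ▸ List.getElem_mem hj)
    rw [if_pos hne, chainFun_of_notMem hxL,
      List.formPerm_apply_of_notMem fun h => hxL (List.take_subset _ _ h)]

lemma chain_mem_RSec {s : ℕ} (P : OrderedPartition n s) (i : Fin s) (hj : j < (P.B i).length) :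
    chain (P.B i) j hj ∈ RSec P.B :=
  Subsemigroup.subset_closure (Or.inl ⟨i, j, hj, chain_apply (P.nodup i) hj⟩)

end Chain

section BlockIdentities

variable {n s : ℕ}

lemma one_mem_RSec (B : Fin s → List (Fin n)) : (1 : IS n) ∈ RSec B :=
  Subsemigroup.subset_closure (Or.inr rfl)

lemma mul_mem_RSec {B : Fin s → List (Fin n)} {a b : IS n} (ha : a ∈ RSec B) (hb : b ∈ RSec B) :
    a * b ∈ RSec B :=
  Subsemigroup.mul_mem _ ha hb

lemma ofSet_eq_one {S : Set (Fin n)} [DecidablePred (· ∈ S)] (h : ∀ x, x ∈ S) :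
    (ofSet S : IS n) = 1 := by
  ext x y
  simp [ofSet_apply, h, one_apply]

lemma ofSet_mul_chain {L : List (Fin n)} (hN : L.Nodup) {t : ℕ} (ht : t < L.length) :
    (ofSet {x | x ∉ L.take t} : IS n) * chain L t ht = ofSet {x | x ∉ L.take (t + 1)} := by
  ext x y
  simp only [mul_apply, ofSet_apply]
  by_cases hxL : x ∈ L
  · simp only [Set.mem_ofPred_eq, List.mem_take_iff_idxOf_lt hxL]
    rcases lt_trichotomy (L.idxOf x) t with hlt | heq | hgt
    · simp [hlt, Nat.lt_succ_of_lt hlt]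
    · simp [heq, chain_apply hN, chainFun_of_idxOf_eq hxL heq]
    · simp [hgt.not_gt, show ¬ L.idxOf x < t + 1 by omega, chain_apply hN,
        chainFun_of_lt_idxOf hxL hgt]
  · have hnot : ∀ m, x ∉ L.take m := fun m h => hxL (List.take_subset _ _ h)
    simp [hnot, chain_apply hN, chainFun_of_notMem hxL]

lemma ofSet_compl_block_mem_RSec (P : OrderedPartition n s) (i : Fin s) :
    (ofSet {x | x ∉ P.B i} : IS n) ∈ RSec P.B := by
  suffices h : ∀ t ≤ (P.B i).length, (ofSet {x | x ∉ (P.B i).take t} : IS n) ∈ RSec P.B by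
    simpa using h _ le_rfl
  intro t
  induction t with
  | zero => intro; rw [ofSet_eq_one (by simp)]; exact one_mem_RSec P.B
  | succ t ih =>
    intro ht
    rw [← ofSet_mul_chain (P.nodup i) ht]
    exact mul_mem_RSec (ih (Nat.le_of_succ_le ht)) (chain_mem_RSec P i ht)

lemma ofSet_block_mem_RSec (P : OrderedPartition n s) (i : Fin s) :
    (ofSet {x | x ∈ P.B i} : IS n) ∈ RSec P.B := by
  have hF : ∀ F : Finset (Fin s), (ofSet {x | ∀ k ∈ F, x ∉ P.B k} : IS n) ∈ RSec P.B := by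
    intro F
    induction F using Finset.induction_on with
    | empty => rw [ofSet_eq_one (by simp)]; exact one_mem_RSec P.B
    | insert k F _ ih =>
      have hmul := mul_mem_RSec (ofSet_compl_block_mem_RSec P k) ih
      rw [ofSet_mul_ofSet] at hmul
      convert hmul using 2
      ext x; simp
  convert hF (Finset.univ.erase i) using 2
  ext x
  obtain ⟨k, hk⟩ := P.cover x
  simp only [Set.mem_ofPred_eq, Finset.mem_erase, Finset.mem_univ, and_true]
  exact ⟨fun hx k hki hxk => P.disjoint i k hki.symm x hx hxk,
    fun h => by_contra fun hxi => h k (fun hki => hxi (hki ▸ hk)) hk⟩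

end BlockIdentities

section Ascending

variable {n s : ℕ} {L : List (Fin n)}

def AscendsOn (L : List (Fin n)) (w : IS n) : Prop :=
  ∀ x ∈ L, (∀ z, w x = some z → z ∈ L ∧ L.idxOf x ≤ L.idxOf z) ∧
    (w x = some x → ∀ y ∈ L, L.idxOf x ≤ L.idxOf y → w y = some y)

lemma AscendsOn.of_forall_apply_eq_self {w : IS n} (h : ∀ x ∈ L, w x = some x) :
    AscendsOn L w := fun x hx =>
  ⟨fun z hz => by rw [h x hx, Option.some_inj] at hz; exact hz ▸ ⟨hx, le_rfl⟩,
    fun _ y hy _ => h y hy⟩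

lemma AscendsOn.mul {u v : IS n} (hu : AscendsOn L u) (hv : AscendsOn L v) :
    AscendsOn L (u * v) := by
  intro x hx
  constructor
  · intro z hz
    obtain ⟨z', hz', hz'z⟩ := Option.bind_eq_some_iff.mp hz
    obtain ⟨hz'L, hxz'⟩ := (hu x hx).1 z' hz'
    obtain ⟨hzL, hz'z⟩ := (hv z' hz'L).1 z hz'z
    exact ⟨hzL, hxz'.trans hz'z⟩
  · intro hxx y hy hxy
    obtain ⟨z, hxz, hzx⟩ := Option.bind_eq_some_iff.mp hxx
    obtain ⟨hzL, hle⟩ := (hu x hx).1 z hxz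
    obtain ⟨-, hge⟩ := (hv z hzL).1 x hzx
    -- `u` cannot move `x` forward, since `v` would then have to move it back
    obtain rfl : z = x := (List.idxOf_inj hzL).mp (le_antisymm hge hle)
    rw [mul_apply, (hu z hx).2 hxz y hy hxy, Option.bind_some, (hv z hx).2 hzx y hy hxy]

lemma ascendsOn_of_chainFun (hN : L.Nodup) {j : ℕ} {a : IS n}
    (ha : ∀ x, a x = chainFun L j x) : AscendsOn L a := by
  intro x hx
  rcases lt_trichotomy (L.idxOf x) j with hlt | heq | hgt
  · rw [ha, chainFun_of_idxOf_lt hx hlt]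
    refine ⟨fun z hz => ?_, fun hxx => ?_⟩
    · obtain ⟨h, rfl⟩ := List.getElem?_eq_some_iff.mp hz
      exact ⟨List.getElem_mem h, by rw [hN.idxOf_getElem]; omega⟩
    · obtain ⟨h, hx'⟩ := List.getElem?_eq_some_iff.mp hxx
      have := hN.idxOf_getElem _ h
      rw [hx'] at this
      omega
  · simp [ha, chainFun_of_idxOf_eq hx heq]
  · refine ⟨fun z hz => ?_, fun _ y hy hxy => ?_⟩
    · rw [ha, chainFun_of_lt_idxOf hx hgt, Option.some_inj] at hz
      exact hz ▸ ⟨hx, le_rfl⟩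
    · rw [ha, chainFun_of_lt_idxOf hy (hgt.trans_le hxy)]

lemma ascendsOn_of_mem_RSec (P : OrderedPartition n s) {w : IS n} (hw : w ∈ RSec P.B)
    (i : Fin s) : AscendsOn (P.B i) w := by
  induction hw using Subsemigroup.closure_induction with
  | mem a ha =>
    rcases ha with ⟨k, j, -, ha⟩ | rfl
    · by_cases hki : k = i
      · exact hki ▸ ascendsOn_of_chainFun (P.nodup k) ha
      · exact .of_forall_apply_eq_self fun x hx =>
          (ha x).trans (chainFun_of_notMem (P.disjoint i k (Ne.symm hki) x hx))
    · exact .of_forall_apply_eq_self fun x _ => one_apply x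
  | mul u v _ _ hu hv => exact hu.mul hv

lemma apply_getLast_of_mem_RSec (P : OrderedPartition n s) {w : IS n} (hw : w ∈ RSec P.B)
    {i : Fin s} {x : Fin n} (hx : x ∈ P.B i) (hwx : w x = some x) :
    w ((P.B i).getLast (P.nonempty i)) = some ((P.B i).getLast (P.nonempty i)) := by
  refine (ascendsOn_of_mem_RSec P hw i x hx).2 hwx _ (List.getLast_mem _) ?_
  rw [List.getLast_eq_getElem, (P.nodup i).idxOf_getElem]
  have := List.idxOf_lt_length_of_mem hx
  omega

lemma apply_getLast_of_mul_eq (P : OrderedPartition n s) {e f : IS n}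
    (hf : f ∈ RSec P.B) (hff : f * f = f) (hf0 : f ≠ ⊥) (hfe : f * e = f) {i : Fin s}
    (he : ∀ x, (e x).isSome → x ∈ P.B i) :
    f ((P.B i).getLast (P.nonempty i)) = some ((P.B i).getLast (P.nonempty i)) := by
  obtain ⟨x, hx⟩ : ∃ x, f x = some x := by
    by_contra! h
    exact hf0 ((eq_ofSet_of_mul_self hff).trans (ofSet_eq_bot (Set.eq_empty_of_forall_notMem h)))
  have hex : e x = some x := by simpa [mul_apply, hx] using congrArg (· x) hfe
  exact apply_getLast_of_mem_RSec P hf (he x (by simp [hex])) hx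

end Ascending

/-- an idempotent `e` of an R-cross-section `R = R(M⃗₁, …, M⃗ₛ)` of `IS n`
is a block idempotent (`dom e ⊆ M_i` for some `i`) iff there are no idempotents
`e₁ ≠ 0 ≠ e₂` of `R` with `e₁ ⪯ e`, `e₂ ⪯ e` and `e₁e₂ = 0`. -/
theorem block_idempotent_iff (n s : ℕ) (hn : 0 < n) (P : OrderedPartition n s)
    (e : IS n) (he : e ∈ RSec P.B) (hee : e * e = e) :
    (∃ i : Fin s, ∀ x, (e x).isSome → x ∈ P.B i) ↔
      ¬∃ e₁ e₂ : IS n, e₁ ∈ RSec P.B ∧ e₂ ∈ RSec P.B ∧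
        e₁ * e₁ = e₁ ∧ e₂ * e₂ = e₂ ∧ e₁ ≠ ⊥ ∧ e₂ ≠ ⊥ ∧
        (e₁ * e = e₁ ∧ e * e₁ = e₁) ∧ (e₂ * e = e₂ ∧ e * e₂ = e₂) ∧ e₁ * e₂ = ⊥ := by
  constructor
  · rintro ⟨i, hi⟩ ⟨e₁, e₂, h₁, h₂, h₁₁, h₂₂, h₁0, h₂0, ⟨h₁e, -⟩, ⟨h₂e, -⟩, h₁₂⟩
    have hlast := congrArg (· ((P.B i).getLast (P.nonempty i))) h₁₂
    simp [mul_apply, apply_getLast_of_mul_eq P h₁ h₁₁ h₁0 h₁e hi,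
      apply_getLast_of_mul_eq P h₂ h₂₂ h₂0 h₂e hi, bot_apply] at hlast
  · obtain ⟨E, _, rfl⟩ : ∃ (E : Set (Fin n)) (_ : DecidablePred (· ∈ E)), e = ofSet E :=
      ⟨_, _, eq_ofSet_of_mul_self hee⟩
    simp only [isSome_ofSet_iff]
    contrapose!
    intro hE
    obtain ⟨i, -⟩ := P.cover ⟨0, hn⟩
    obtain ⟨x₀, hx₀, -⟩ := hE i
    obtain ⟨k, hk⟩ := P.cover x₀
    obtain ⟨x₁, hx₁, hx₁k⟩ := hE k
    have hsub₁ : E ∩ {x | x ∉ P.B k} ⊆ E := Set.inter_subset_left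
    have hsub₂ : E ∩ {x | x ∈ P.B k} ⊆ E := Set.inter_subset_left
    refine ⟨ofSet (E ∩ {x | x ∉ P.B k}), ofSet (E ∩ {x | x ∈ P.B k}),
      ?_, ?_, (ofSet_mul_ofSet_of_subset subset_rfl).1, (ofSet_mul_ofSet_of_subset subset_rfl).1,
      ofSet_ne_bot ⟨x₁, hx₁, hx₁k⟩, ofSet_ne_bot ⟨x₀, hx₀, hk⟩,
      ofSet_mul_ofSet_of_subset hsub₁, ofSet_mul_ofSet_of_subset hsub₂, ?_⟩
    · rw [← ofSet_mul_ofSet]; exact mul_mem_RSec he (ofSet_compl_block_mem_RSec P k)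
    · rw [← ofSet_mul_ofSet]; exact mul_mem_RSec he (ofSet_block_mem_RSec P k)
    · rw [ofSet_mul_ofSet]
      exact ofSet_eq_bot (by ext; simp; tauto)

end ISW
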